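/- Let N ≥ 2 and let {φ_1,...,φ_{N-1}} be linearly independent unit-norm vectors in an N-dimensional real inner product space H, and let W_i = φ_i^⊥ = {x ∈ H : ⟨x, φ_i⟩ = 0} for i = 1,...,N-1. Then the family of subspaces {W_i}_{i=1}^{N-1} does not do norm retrieval. -/

import Mathlib

open scoped RealInnerProductSpace

noncomputable section

/-- A family of subspaces of a finite-dimensional real inner product space does
norm retrieval (via their orthogonal projections) if equality of the norms of all the
orthogonal projections of two vectors implies equality of the norms of the vectors. -/
def DoesNormRetrieval {H : Type*} [NormedAddCommGroup H] [InnerProductSpace ℝ H]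
    [FiniteDimensional ℝ H] {ι : Type*} (W : ι → Submodule ℝ H) : Prop :=
  ∀ x y : H, (∀ i : ι, ‖(W i).orthogonalProjection x‖ = ‖(W i).orthogonalProjection y‖) →
    ‖x‖ = ‖y‖

/-!
Write `P_i` for the orthogonal projection onto `φ iᗮ`, so that
`‖P_i x‖² = ‖x‖² - ⟪φ i, x⟫² / ‖φ i‖²`. By linear independence (the Gram matrix is invertible)
there is a `w` with `⟪φ i, w⟫ = ‖φ i‖` for all `i`, hence `‖P_i w‖² = ‖w‖² - 1` for every `i`.
Since there are fewer vectors than dimensions, there is a `y` orthogonal to every `φ i` with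
`‖y‖² = ‖w‖² - 1`. Then `‖P_i y‖ = ‖y‖ = ‖P_i w‖` for all `i`, but `‖y‖ ≠ ‖w‖`.
-/

open Matrix

section

variable {H : Type*} [NormedAddCommGroup H] [InnerProductSpace ℝ H]

theorem norm_sq_starProjection_span_singleton (v x : H) :
    ‖(ℝ ∙ v).starProjection x‖ ^ 2 = ⟪v, x⟫ ^ 2 / ‖v‖ ^ 2 := by
  rcases eq_or_ne v 0 with rfl | hv
  · simp
  rw [Submodule.starProjection_singleton, RCLike.ofReal_real_eq_id, id, norm_smul, mul_pow,
    Real.norm_eq_abs, sq_abs, div_pow]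
  field_simp

theorem norm_sq_starProjection_orthogonal_span_singleton (v x : H) :
    ‖(ℝ ∙ v)ᗮ.starProjection x‖ ^ 2 = ‖x‖ ^ 2 - ⟪v, x⟫ ^ 2 / ‖v‖ ^ 2 := by
  rw [(ℝ ∙ v).norm_sq_eq_add_norm_sq_starProjection x, norm_sq_starProjection_span_singleton]
  ring

theorem LinearIndependent.exists_inner_eq {ι : Type*} [Fintype ι] {φ : ι → H}
    (hφ : LinearIndependent ℝ φ) (a : ι → ℝ) : ∃ w : H, ∀ i, ⟪φ i, w⟫ = a i := by
  classical
  have hG : IsUnit (gram ℝ φ).det := (det_gram_ne_zero_iff_linearIndependent.mpr hφ).isUnit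
  refine ⟨∑ j, ((gram ℝ φ)⁻¹ *ᵥ a) j • φ j, fun i => ?_⟩
  have := congrFun (mulVec_mulVec a (gram ℝ φ) (gram ℝ φ)⁻¹) i
  rw [mul_nonsing_inv _ hG, one_mulVec] at this
  rw [← this]
  simp [inner_sum, real_inner_smul_right, mulVec, dotProduct, gram, mul_comm]

theorem exists_norm_eq_forall_inner_eq_zero {ι : Type*} [Fintype ι] [FiniteDimensional ℝ H]
    (φ : ι → H) (hcard : Fintype.card ι < Module.finrank ℝ H) {c : ℝ} (hc : 0 ≤ c) :
    ∃ z : H, ‖z‖ = c ∧ ∀ i, ⟪φ i, z⟫ = 0 := by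
  let S := Submodule.span ℝ (Set.range φ)
  have hS : S ≠ ⊤ := fun h => by
    have : Module.finrank ℝ S ≤ Fintype.card ι := finrank_range_le_card φ
    rw [h, finrank_top] at this
    omega
  have : Nontrivial Sᗮ :=
    Submodule.nontrivial_iff_ne_bot.mpr fun h => hS (Submodule.orthogonal_eq_bot_iff.mp h)
  obtain ⟨z, hz⟩ := exists_norm_eq Sᗮ hc
  exact ⟨z, hz, fun i =>
    Submodule.inner_right_of_mem_orthogonal (Submodule.subset_span (Set.mem_range_self i)) z.2⟩

theorem not_doesNormRetrieval_orthogonal_span_singleton [FiniteDimensional ℝ H] {ι : Type*}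
    [Fintype ι] [Nonempty ι] {φ : ι → H} (hφ : LinearIndependent ℝ φ)
    (hcard : Fintype.card ι < Module.finrank ℝ H) :
    ¬ DoesNormRetrieval (fun i => (ℝ ∙ φ i)ᗮ) := by
  intro hret
  obtain ⟨w, hw⟩ := hφ.exists_inner_eq (fun i => ‖φ i‖)
  have hw_proj (i : ι) : ‖(ℝ ∙ φ i)ᗮ.starProjection w‖ ^ 2 = ‖w‖ ^ 2 - 1 := by
    rw [norm_sq_starProjection_orthogonal_span_singleton, hw,
      div_self (pow_ne_zero 2 (norm_ne_zero_iff.mpr (hφ.ne_zero i)))]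
  obtain ⟨i₀⟩ := ‹Nonempty ι›
  obtain ⟨y, hy, hy_orth⟩ :=
    exists_norm_eq_forall_inner_eq_zero φ hcard (norm_nonneg ((ℝ ∙ φ i₀)ᗮ.starProjection w))
  have hy_proj (i : ι) : ‖(ℝ ∙ φ i)ᗮ.starProjection y‖ = ‖y‖ :=
    Submodule.norm_starProjection_apply _
      (Submodule.mem_orthogonal_singleton_iff_inner_right.mpr (hy_orth i))
  have hw_eq : ‖w‖ = ‖y‖ := hret w y fun i => by
    change ‖(ℝ ∙ φ i)ᗮ.starProjection w‖ = ‖(ℝ ∙ φ i)ᗮ.starProjection y‖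
    rw [hy_proj, hy, ← sq_eq_sq₀ (norm_nonneg _) (norm_nonneg _), hw_proj, hw_proj]
  have := hw_proj i₀
  rw [← hy, ← hw_eq] at this
  linarith

end

theorem stmt_6_general {H : Type*} [NormedAddCommGroup H] [InnerProductSpace ℝ H]
    [FiniteDimensional ℝ H] {N : ℕ} (hN : 2 ≤ N)
    (hdim : Module.finrank ℝ H = N)
    (φ : Fin (N - 1) → H) (hind : LinearIndependent ℝ φ) :
    ¬ DoesNormRetrieval (fun i : Fin (N - 1) => (ℝ ∙ φ i)ᗮ) := by
  have : Nonempty (Fin (N - 1)) := ⟨⟨0, by omega⟩⟩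
  exact not_doesNormRetrieval_orthogonal_span_singleton hind
    (by rw [Fintype.card_fin, hdim]; omega)

/-- If `{φ_i}_{i=1}^{N-1}` are linearly independent unit vectors in an `N`-dimensional
real inner product space (`N ≥ 2`), then the hyperplanes `{φ_i^⊥}_{i=1}^{N-1}` cannot do
norm retrieval. -/
theorem stmt_6 {H : Type*} [NormedAddCommGroup H] [InnerProductSpace ℝ H]
    [FiniteDimensional ℝ H] {N : ℕ} (hN : 2 ≤ N)
    (hdim : Module.finrank ℝ H = N)
    (φ : Fin (N - 1) → H) (hind : LinearIndependent ℝ φ)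
    (hnorm : ∀ i, ‖φ i‖ = 1) :
    ¬ DoesNormRetrieval (fun i : Fin (N - 1) => (ℝ ∙ φ i)ᗮ) :=
  stmt_6_general hN hdim φ hind
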